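/- Let ϕ = χ_{A_N} with A_N = ⋃_{j=0}^{N−1} [2j/N, (2j+1)/N). Then ϕ satisfies the refinement relation χ_{A_N}(t/(2N)) = Σ_{j=0}^{N−1} [χ_{A_N}(t − 4j) + χ_{A_N}(t − 1/N − 4j)] for almost every t ∈ ℝ; equivalently, in the Fourier domain ϕ̂(2Nξ) = (1/(2N))(1 + e^{−2πiξ/N}) (Σ_{j=0}^{N−1} e^{−8πijξ}) ϕ̂(ξ). -/

import Mathlib

/-!
The pieces of A_N are the even-numbered intervals [2k/N, (2k+1)/N) of the partition of [0, 2)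
into steps of length 1/N, and A_N + 1/N consists of the odd-numbered ones, so
ϕ + ϕ(· - 1/N) is the indicator of [0, 2). Dilating by 2N sends the pieces of A_N to
[4j, 4j + 2) = [0, 2) + 4j, hence the refinement equation holds at every t. The Fourier identity
is its image under the dilation and translation rules for the transform of the integrable ϕ.
-/

open MeasureTheory Complex Real ComplexConjugate

noncomputable section

/-- The set A_N = ⋃_{j=0}^{N−1} [2j/N, (2j+1)/N). -/
def haarSet (N : ℕ) : Set ℝ :=
  ⋃ j ∈ Finset.range N, Set.Ico ((2 * j : ℝ) / N) ((2 * j + 1 : ℝ) / N)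

/-- The nonuniform Haar scaling function ϕ = χ_{A_N}. -/
def haarScaling (N : ℕ) : ℝ → ℂ := Set.indicator (haarSet N) (fun _ => (1 : ℂ))

section IntervalIndicator

variable {α M : Type*} [LinearOrder α] [AddCommMonoid M]

theorem indicator_Ico_add_indicator_Ico {a b c : α} (hab : a ≤ b) (hbc : b ≤ c) (f : α → M)
    (t : α) :
    (Set.Ico a b).indicator f t + (Set.Ico b c).indicator f t = (Set.Ico a c).indicator f t := by
  rw [← Set.Ico_union_Ico_eq_Ico hab hbc,
    Set.indicator_union_of_disjoint Set.Ico_disjoint_Ico_same]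

theorem Monotone.sum_indicator_Ico_succ {u : ℕ → α} (hu : Monotone u) (f : α → M) (n : ℕ)
    (t : α) :
    ∑ k ∈ Finset.range n, (Set.Ico (u k) (u (k + 1))).indicator f t
      = (Set.Ico (u 0) (u n)).indicator f t := by
  induction n with
  | zero => simp
  | succ n ih =>
    rw [Finset.sum_range_succ, ih,
      indicator_Ico_add_indicator_Ico (hu n.zero_le) (hu n.le_succ)]

theorem indicator_Ico_sub_const (a b c : ℝ) (m : M) (t : ℝ) :
    (Set.Ico a b).indicator (fun _ ↦ m) (t - c)
      = (Set.Ico (a + c) (b + c)).indicator (fun _ ↦ m) t := by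
  rw [← Set.preimage_sub_const_Ico, ← Set.indicator_comp_right (fun x ↦ x - c)]
  rfl

theorem indicator_Ico_div_const (a b : ℝ) {c : ℝ} (hc : 0 < c) (m : M) (t : ℝ) :
    (Set.Ico a b).indicator (fun _ ↦ m) (t / c)
      = (Set.Ico (a * c) (b * c)).indicator (fun _ ↦ m) t := by
  rw [← Set.indicator_comp_right (fun x ↦ x / c)]
  simp only [div_eq_mul_inv, Set.preimage_mul_const_Ico₀ _ _ (inv_pos.2 hc), inv_inv]
  rfl

end IntervalIndicator

open FourierTransform

namespace Real

variable {E : Type*} [NormedAddCommGroup E] [NormedSpace ℂ E]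

theorem integrable_fourierChar_smul {f : ℝ → E} (hf : Integrable f) (ξ : ℝ) :
    Integrable fun v : ℝ ↦ 𝐞 (-(v * ξ)) • f v := by
  simpa [inner_apply, mul_comm] using (fourierIntegral_convergent_iff (μ := volume) ξ).2 hf

theorem fourier_add_of_integrable {f g : ℝ → E} (hf : Integrable f) (hg : Integrable g) (ξ : ℝ) :
    𝓕 (fun t ↦ f t + g t) ξ = 𝓕 f ξ + 𝓕 g ξ := by
  simp only [fourier_real_eq, smul_add]
  exact integral_add (integrable_fourierChar_smul hf ξ) (integrable_fourierChar_smul hg ξ)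

theorem fourier_finsetSum_of_integrable {ι : Type*} (s : Finset ι) {f : ι → ℝ → E}
    (hf : ∀ i ∈ s, Integrable (f i)) (ξ : ℝ) :
    𝓕 (fun t ↦ ∑ i ∈ s, f i t) ξ = ∑ i ∈ s, 𝓕 (f i) ξ := by
  simp only [fourier_real_eq, Finset.smul_sum]
  exact integral_finsetSum s fun i hi ↦ integrable_fourierChar_smul (hf i hi) ξ

theorem fourier_comp_sub_right (f : ℝ → E) (c ξ : ℝ) :
    𝓕 (fun t ↦ f (t - c)) ξ = Complex.exp (-2 * π * I * c * ξ) • 𝓕 f ξ := by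
  simp only [fourier_real_eq_integral_exp_smul, ← integral_smul, smul_smul, ← Complex.exp_add]
  conv_rhs => rw [← integral_sub_right_eq_self _ c]
  congr 1 with v
  congr 2
  push_cast
  ring

theorem fourier_comp_div (f : ℝ → E) {c : ℝ} (hc : c ≠ 0) (ξ : ℝ) :
    𝓕 (fun t ↦ f (t / c)) ξ = |c| • 𝓕 f (c * ξ) := by
  simp only [fourier_real_eq_integral_exp_smul]
  rw [← Measure.integral_comp_div _ c]
  congr 1 with v
  congr 3
  field_simp

end Real

theorem pairwise_disjoint_haarSet_pieces (N : ℕ) :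
    Pairwise (Function.onFun Disjoint fun k : ℕ ↦
      Set.Ico ((2 * k : ℝ) / N) ((2 * k + 1 : ℝ) / N)) := by
  have hmono : Monotone fun k : ℕ ↦ (2 * k : ℝ) / N := fun k l hkl ↦ by dsimp only; gcongr
  have hsub (k : ℕ) : Set.Ico ((2 * k : ℝ) / N) ((2 * k + 1 : ℝ) / N)
      ⊆ Set.Ico ((2 * k : ℝ) / N) ((2 * (Order.succ k : ℕ) : ℝ) / N) :=
    Set.Ico_subset_Ico_right (by rw [Order.succ_eq_add_one]; push_cast; gcongr; linarith)
  exact hmono.pairwise_disjoint_on_Ico_succ.mono fun k l h ↦ h.mono (hsub k) (hsub l)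

theorem haarScaling_eq_sum_indicator_Ico (N : ℕ) (s : ℝ) :
    haarScaling N s = ∑ k ∈ Finset.range N,
      (Set.Ico ((2 * k : ℝ) / N) ((2 * k + 1 : ℝ) / N)).indicator (fun _ ↦ (1 : ℂ)) s :=
  Finset.indicator_biUnion_apply _ _ ((pairwise_disjoint_haarSet_pieces N).set_pairwise _) s

theorem integrable_haarScaling (N : ℕ) : Integrable (haarScaling N) := by
  rw [funext (haarScaling_eq_sum_indicator_Ico N)]
  exact integrable_finsetSum _ fun k _ ↦
    (integrable_indicator_iff measurableSet_Ico).2 (integrableOn_const measure_Ico_lt_top.ne)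

theorem haarScaling_add_haarScaling_sub_eq_indicator_Ico {N : ℕ} (hN : 1 ≤ N) (s : ℝ) :
    haarScaling N s + haarScaling N (s - 1 / N)
      = (Set.Ico (0 : ℝ) 2).indicator (fun _ ↦ (1 : ℂ)) s := by
  have hN0 : (N : ℝ) ≠ 0 := by positivity
  set u : ℕ → ℝ := fun k ↦ 2 * k / N with hu
  have hmono : Monotone u := fun k l hkl ↦ by simp only [hu]; gcongr
  have hpiece (k : ℕ) :
      (Set.Ico ((2 * k : ℝ) / N) ((2 * k + 1 : ℝ) / N)).indicator (fun _ ↦ (1 : ℂ)) s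
        + (Set.Ico ((2 * k : ℝ) / N + 1 / N) ((2 * k + 1 : ℝ) / N + 1 / N)).indicator
            (fun _ ↦ (1 : ℂ)) s
        = (Set.Ico (u k) (u (k + 1))).indicator (fun _ ↦ (1 : ℂ)) s := by
    rw [show (2 * k : ℝ) / N + 1 / N = (2 * k + 1) / N by ring,
      show (2 * k + 1 : ℝ) / N + 1 / N = u (k + 1) by simp only [hu]; push_cast; ring]
    exact indicator_Ico_add_indicator_Ico (by gcongr; linarith)
      (by simp only [hu]; push_cast; gcongr; linarith) _ _
  have hu0 : u 0 = 0 := by simp [hu]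
  have huN : u N = 2 := by simp [hu, hN0]
  simp only [haarScaling_eq_sum_indicator_Ico, indicator_Ico_sub_const,
    ← Finset.sum_add_distrib, hpiece, hmono.sum_indicator_Ico_succ, hu0, huN]

theorem haarScaling_div_eq_sum_indicator_Ico {N : ℕ} (hN : 1 ≤ N) (t : ℝ) :
    haarScaling N (t / (2 * N))
      = ∑ j ∈ Finset.range N, (Set.Ico (0 : ℝ) 2).indicator (fun _ ↦ (1 : ℂ)) (t - 4 * j) := by
  rw [haarScaling_eq_sum_indicator_Ico]
  refine Finset.sum_congr rfl fun j _ ↦ ?_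
  rw [indicator_Ico_div_const _ _ (by positivity), indicator_Ico_sub_const]
  congr 2 <;> field_simp <;> ring

theorem haarScaling_div_eq_sum_translates {N : ℕ} (hN : 1 ≤ N) (t : ℝ) :
    haarScaling N (t / (2 * N))
      = ∑ j ∈ Finset.range N, (haarScaling N (t - 4 * j) + haarScaling N (t - 1 / N - 4 * j)) := by
  simp only [haarScaling_div_eq_sum_indicator_Ico hN, sub_right_comm t (1 / (N : ℝ)),
    haarScaling_add_haarScaling_sub_eq_indicator_Ico hN]

/-- The refinement equation of the nonuniform Haar scaling function, in the time
domain (a.e.) and equivalently in the Fourier domain. -/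
theorem haarScaling_refinement (N : ℕ) (hN : 1 ≤ N) :
    (∀ᵐ t : ℝ, haarScaling N (t / (2 * N))
        = ∑ j ∈ Finset.range N,
            (haarScaling N (t - 4 * j) + haarScaling N (t - 1 / N - 4 * j))) ∧
    (∀ ξ : ℝ, FourierTransform.fourier (haarScaling N) (2 * N * ξ)
        = (1 / (2 * N : ℂ)) * (1 + Complex.exp (-2 * π * I * ξ / N)) *
            (∑ j ∈ Finset.range N, Complex.exp (-8 * π * I * j * ξ)) *
            FourierTransform.fourier (haarScaling N) ξ) := by
  refine ⟨.of_forall (haarScaling_div_eq_sum_translates hN), fun ξ ↦ ?_⟩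
  have hN0 : (0 : ℝ) < 2 * N := by positivity
  have hφ := integrable_haarScaling N
  have hphase (j : ℕ) : Complex.exp (-2 * π * I * (4 * j : ℝ) * ξ)
      + Complex.exp (-2 * π * I * (1 / N + 4 * j : ℝ) * ξ)
      = (1 + Complex.exp (-2 * π * I * ξ / N)) * Complex.exp (-8 * π * I * j * ξ) := by
    rw [add_mul, one_mul, ← Complex.exp_add]
    congr 2 <;> push_cast <;> ring
  calc 𝓕 (haarScaling N) (2 * N * ξ)
      = (2 * N : ℝ)⁻¹ • 𝓕 (fun t ↦ haarScaling N (t / (2 * N))) ξ := by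
        rw [Real.fourier_comp_div _ hN0.ne', abs_of_pos hN0, inv_smul_smul₀ hN0.ne']
    _ = (2 * N : ℝ)⁻¹ • ∑ j ∈ Finset.range N,
          (Complex.exp (-2 * π * I * (4 * j : ℝ) * ξ)
            + Complex.exp (-2 * π * I * (1 / N + 4 * j : ℝ) * ξ)) • 𝓕 (haarScaling N) ξ := by
        simp only [haarScaling_div_eq_sum_translates hN, sub_sub]
        rw [Real.fourier_finsetSum_of_integrable _ fun j _ ↦
          (hφ.comp_sub_right _).fun_add (hφ.comp_sub_right _)]
        simp only [Real.fourier_add_of_integrable (hφ.comp_sub_right _) (hφ.comp_sub_right _),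
          Real.fourier_comp_sub_right, add_smul]
    _ = _ := by
        simp only [hphase, smul_eq_mul, Complex.real_smul, ← Finset.sum_mul, ← Finset.mul_sum]
        push_cast
        ring

end
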